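/- Let d ≥ 2 and f = x_1^k x_2^{d−k} ∈ ℂ[x_1,x_2] with 0 < k ≤ d, and let dH_f be the differential of the Hessian map at f, restricted to homogeneous binary forms of degree d. (i) If k = d (i.e. f = x_1^d), then dim Ker(dH_f) = 2. (ii) If k = d−1, then dim Ker(dH_f) = 1 unless d = 2, in which case dim Ker(dH_f) = 2. -/

import Mathlib

open MvPolynomial

/-- The differential of the Hessian map at a binary form `f`:
`dH_f(g) = g_{11}f_{22} + f_{11}g_{22} - 2f_{12}g_{12}`. -/
noncomputable def dH2 (f : MvPolynomial (Fin 2) ℂ) :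
    MvPolynomial (Fin 2) ℂ →ₗ[ℂ] MvPolynomial (Fin 2) ℂ :=
  (LinearMap.mulLeft ℂ (pderiv 1 (pderiv 1 f))).comp
      ((pderiv (R := ℂ) (0 : Fin 2)).toLinearMap.comp (pderiv 0).toLinearMap)
  + (LinearMap.mulLeft ℂ (pderiv 0 (pderiv 0 f))).comp
      ((pderiv (R := ℂ) (1 : Fin 2)).toLinearMap.comp (pderiv 1).toLinearMap)
  - (LinearMap.mulLeft ℂ (2 * pderiv 0 (pderiv 1 f))).comp
      ((pderiv (R := ℂ) (0 : Fin 2)).toLinearMap.comp (pderiv 1).toLinearMap)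

/-- The kernel of the differential of the Hessian map at `f`, restricted to homogeneous
binary forms of degree `d`. -/
noncomputable def kerDH2 (d : ℕ) (f : MvPolynomial (Fin 2) ℂ) :
    Submodule ℂ (MvPolynomial (Fin 2) ℂ) :=
  homogeneousSubmodule (Fin 2) ℂ d ⊓ LinearMap.ker (dH2 f)

/-!
Multiplying by `x₀²x₁²` turns the second derivatives into polynomials in the Euler operators
`θᵢ = xᵢ∂ᵢ`: `xᵢ²∂ᵢ² = θᵢ(θᵢ - 1)` and `x₀x₁∂₀∂₁ = θ₀θ₁`. For a monomial `f = x^m` this gives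
`x₀²x₁² · dH_f(g) = f · D g` with `D` diagonal on monomials, `D x^n = hessCoeff m n · x^n`, so the
kernel of `dH_f` on forms of degree `d` is spanned by the monomials `x^n` of degree `d` with
`hessCoeff m n = 0`. For `m = (d, 0)` these are `x₀^d, x₀^{d-1}x₁`; for `m = (d-1, 1)` only
`x₀^d`, except for `d = 2`, where `x₁²` is a second one.
-/

namespace MvPolynomial

variable {σ R : Type*} [CommRing R]

theorem coeff_X_mul_pderiv (i : σ) (p : MvPolynomial σ R) (n : σ →₀ ℕ) :
    coeff n (X i * pderiv i p) = n i * coeff n p := by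
  classical
  induction p using MvPolynomial.induction_on' with
  | add p q hp hq => simp [mul_add, hp, hq]
  | monomial m r =>
    rw [X_mul_pderiv_monomial, coeff_smul, coeff_monomial]
    split_ifs with h
    · simp [h, nsmul_eq_mul]
    · simp

theorem X_sq_mul_pderiv_pderiv (i : σ) (p : MvPolynomial σ R) :
    X i ^ 2 * pderiv i (pderiv i p) = X i * pderiv i (X i * pderiv i p) - X i * pderiv i p := by
  rw [pderiv_mul, pderiv_X_self]
  ring

theorem coeff_X_sq_mul_pderiv_pderiv (i : σ) (p : MvPolynomial σ R) (n : σ →₀ ℕ) :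
    coeff n (X i ^ 2 * pderiv i (pderiv i p)) = n i * (n i - 1) * coeff n p := by
  rw [X_sq_mul_pderiv_pderiv, coeff_sub, coeff_X_mul_pderiv, coeff_X_mul_pderiv]
  ring

theorem coeff_X_mul_X_mul_pderiv_pderiv {i j : σ} (hij : i ≠ j) (p : MvPolynomial σ R)
    (n : σ →₀ ℕ) :
    coeff n (X i * X j * pderiv i (pderiv j p)) = n i * n j * coeff n p := by
  have hθθ : X i * X j * pderiv i (pderiv j p) = X i * pderiv i (X j * pderiv j p) := by
    rw [pderiv_mul, pderiv_X_of_ne hij.symm]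
    ring
  rw [hθθ, coeff_X_mul_pderiv, coeff_X_mul_pderiv]
  ring

theorem X_sq_mul_pderiv_pderiv_monomial (i : σ) (m : σ →₀ ℕ) (r : R) :
    X i ^ 2 * pderiv i (pderiv i (monomial m r)) = C ((m i : R) * (m i - 1)) * monomial m r := by
  classical
  ext n
  rw [coeff_X_sq_mul_pderiv_pderiv, coeff_C_mul, coeff_monomial]
  split_ifs with h
  · rw [h]
  · simp

theorem X_mul_X_mul_pderiv_pderiv_monomial {i j : σ} (hij : i ≠ j) (m : σ →₀ ℕ) (r : R) :
    X i * X j * pderiv i (pderiv j (monomial m r)) = C ((m i : R) * m j) * monomial m r := by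
  classical
  ext n
  rw [coeff_X_mul_X_mul_pderiv_pderiv hij, coeff_C_mul, coeff_monomial]
  split_ifs with h
  · rw [h]
  · simp

theorem finrank_restrictSupport [Nontrivial R] (s : Set (σ →₀ ℕ)) :
    Module.finrank R (restrictSupport R s) = s.ncard :=
  (Module.finrank_eq_nat_card_basis (basisRestrictSupport R s)).trans (Nat.card_coe_set_eq s)

end MvPolynomial

namespace Finsupp

theorem eq_single_zero_add_single_one_iff {M : Type*} [AddZeroClass M] (n : Fin 2 →₀ M)
    (p q : M) : n = single 0 p + single 1 q ↔ n 0 = p ∧ n 1 = q := by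
  simp [Finsupp.ext_iff, Fin.forall_fin_two]

theorem degree_fin_two {M : Type*} [AddCommMonoid M] (n : Fin 2 →₀ M) :
    n.degree = n 0 + n 1 := by
  rw [degree_eq_sum, Fin.sum_univ_two]

end Finsupp

open Finsupp (single)

/-- `x₀²x₁² · dH_{x^m}(x^n) = hessCoeff m n · x^{m+n}`. -/
def hessCoeff (m n : Fin 2 →₀ ℕ) : ℤ :=
  m 1 * (m 1 - 1) * (n 0 * (n 0 - 1)) + m 0 * (m 0 - 1) * (n 1 * (n 1 - 1))
    - 2 * (m 0 * m 1) * (n 0 * n 1)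

def hessKernelSupport (d : ℕ) (m : Fin 2 →₀ ℕ) : Set (Fin 2 →₀ ℕ) :=
  {n | n.degree = d ∧ hessCoeff m n = 0}

theorem dH2_apply (f g : MvPolynomial (Fin 2) ℂ) :
    dH2 f g = pderiv 1 (pderiv 1 f) * pderiv 0 (pderiv 0 g)
      + pderiv 0 (pderiv 0 f) * pderiv 1 (pderiv 1 g)
      - 2 * pderiv 0 (pderiv 1 f) * pderiv 0 (pderiv 1 g) := by
  simp [dH2, mul_assoc]

theorem dH2_monomial_eq_zero_iff (m : Fin 2 →₀ ℕ) (g : MvPolynomial (Fin 2) ℂ) :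
    dH2 (monomial m 1) g = 0 ↔ ∀ n, hessCoeff m n = 0 ∨ coeff n g = 0 := by
  set f : MvPolynomial (Fin 2) ℂ := monomial m 1
  set D : MvPolynomial (Fin 2) ℂ :=
    C ((m 1 : ℂ) * (m 1 - 1)) * (X 0 ^ 2 * pderiv 0 (pderiv 0 g))
      + C ((m 0 : ℂ) * (m 0 - 1)) * (X 1 ^ 2 * pderiv 1 (pderiv 1 g))
      - C (2 * (m 0 : ℂ) * m 1) * (X 0 * X 1 * pderiv 0 (pderiv 1 g))
  have hfactor : X 0 ^ 2 * X 1 ^ 2 * dH2 f g = f * D := by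
    calc X 0 ^ 2 * X 1 ^ 2 * dH2 f g
        = X 1 ^ 2 * pderiv 1 (pderiv 1 f) * (X 0 ^ 2 * pderiv 0 (pderiv 0 g))
          + X 0 ^ 2 * pderiv 0 (pderiv 0 f) * (X 1 ^ 2 * pderiv 1 (pderiv 1 g))
          - 2 * (X 0 * X 1 * pderiv 0 (pderiv 1 f)) * (X 0 * X 1 * pderiv 0 (pderiv 1 g)) := by
          rw [dH2_apply]; ring
      _ = f * D := by
          rw [X_sq_mul_pderiv_pderiv_monomial, X_sq_mul_pderiv_pderiv_monomial,
            X_mul_X_mul_pderiv_pderiv_monomial (by decide)]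
          simp only [D, map_mul, map_ofNat]
          ring
  have hcoeff : ∀ n, coeff n D = hessCoeff m n * coeff n g := by
    intro n
    rw [coeff_sub, coeff_add, coeff_C_mul, coeff_C_mul, coeff_C_mul, coeff_X_sq_mul_pderiv_pderiv,
      coeff_X_sq_mul_pderiv_pderiv, coeff_X_mul_X_mul_pderiv_pderiv (by decide), hessCoeff]
    push_cast
    ring
  have hX : (X 0 ^ 2 * X 1 ^ 2 : MvPolynomial (Fin 2) ℂ) ≠ 0 := by simp [X_ne_zero]
  have hf : f ≠ 0 := by simp [f]
  rw [← mul_right_inj' hX, hfactor, mul_zero, mul_eq_zero, or_iff_right hf, MvPolynomial.ext_iff]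
  simp [hcoeff]

theorem kerDH2_monomial (d : ℕ) (m : Fin 2 →₀ ℕ) :
    kerDH2 d (monomial m 1) = restrictSupport ℂ (hessKernelSupport d m) := by
  have hhom : homogeneousSubmodule (Fin 2) ℂ d = restrictSupport ℂ {n | n.degree = d} :=
    homogeneousSubmodule_eq_finsupp_supported ..
  ext g
  rw [kerDH2, Submodule.mem_inf, LinearMap.mem_ker, dH2_monomial_eq_zero_iff, hhom,
    mem_restrictSupport_iff, mem_restrictSupport_iff, hessKernelSupport]
  simp only [Set.subset_def, Finset.mem_coe, MvPolynomial.mem_support_iff, Set.mem_ofPred_eq]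
  grind

theorem hessKernelSupport_X0_pow {d : ℕ} (hd : 2 ≤ d) :
    hessKernelSupport d (single 0 d + single 1 0)
      = {single 0 d + single 1 0, single 0 (d - 1) + single 1 1} := by
  ext n
  have hc : hessCoeff (single 0 d + single 1 0) n = d * (d - 1) * (n 1 * (n 1 - 1)) := by
    simp only [hessCoeff, Finsupp.add_apply, Finsupp.single_apply]
    push_cast
    ring
  simp only [hessKernelSupport, Set.mem_ofPred_eq, Set.mem_insert_iff, Set.mem_singleton_iff,
    Finsupp.eq_single_zero_add_single_one_iff, Finsupp.degree_fin_two, hc, mul_eq_zero]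
  omega

theorem hessKernelSupport_X0_pow_mul_X1 {d : ℕ} (hd : 3 ≤ d) :
    hessKernelSupport d (single 0 (d - 1) + single 1 1) = {single 0 d + single 1 0} := by
  ext n
  have hc (hn : n 0 + n 1 = d) : hessCoeff (single 0 (d - 1) + single 1 1) n
      = ((d : ℤ) - 1) * n 1 * (d * (n 1 - 3) + 2) := by
    have hn0 : (n 0 : ℤ) = d - n 1 := by omega
    simp only [hessCoeff, Finsupp.add_apply, Finsupp.single_apply, hn0]
    push_cast [Nat.cast_sub (show 1 ≤ d by omega)]
    ring
  simp only [hessKernelSupport, Set.mem_ofPred_eq, Set.mem_singleton_iff,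
    Finsupp.eq_single_zero_add_single_one_iff, Finsupp.degree_fin_two]
  constructor
  · rintro ⟨hn, hzero⟩
    rw [hc hn, mul_eq_zero, mul_eq_zero] at hzero
    rcases hzero with h | h
    · omega
    · -- `d (3 - n₁) = 2` has no solution with `d ≥ 3`
      rcases le_or_gt 3 (n 1 : ℤ) with h3 | h3 <;> nlinarith
  · rintro ⟨h0, h1⟩
    refine ⟨by omega, ?_⟩
    rw [hc (by omega), h1]
    ring

theorem hessKernelSupport_X0_mul_X1 :
    hessKernelSupport 2 (single 0 1 + single 1 1)
      = {single 0 2 + single 1 0, single 0 0 + single 1 2} := by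
  ext n
  have hc : hessCoeff (single 0 1 + single 1 1) n = -2 * (n 0 * n 1) := by
    simp only [hessCoeff, Finsupp.add_apply, Finsupp.single_apply]
    push_cast
    ring
  simp only [hessKernelSupport, Set.mem_ofPred_eq, Set.mem_insert_iff, Set.mem_singleton_iff,
    Finsupp.eq_single_zero_add_single_one_iff, Finsupp.degree_fin_two, hc, mul_eq_zero]
  omega

theorem X0_pow_mul_X1_pow_eq_monomial (k l : ℕ) :
    (X 0 ^ k * X 1 ^ l : MvPolynomial (Fin 2) ℂ) = monomial (single 0 k + single 1 l) 1 := by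
  rw [X_pow_eq_monomial, X_pow_eq_monomial, monomial_mul, one_mul]

theorem ker_dH_monomial_extreme_cases (d k : ℕ) (hd : 2 ≤ d) :
    (k = d → Module.finrank ℂ ↥(kerDH2 d (X 0 ^ k * X 1 ^ (d - k))) = 2) ∧
    (k = d - 1 → d ≠ 2 → Module.finrank ℂ ↥(kerDH2 d (X 0 ^ k * X 1 ^ (d - k))) = 1) ∧
    (k = d - 1 → d = 2 → Module.finrank ℂ ↥(kerDH2 d (X 0 ^ k * X 1 ^ (d - k))) = 2) := by
  rw [X0_pow_mul_X1_pow_eq_monomial, kerDH2_monomial, finrank_restrictSupport]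
  refine ⟨?_, ?_, ?_⟩
  · rintro rfl
    rw [Nat.sub_self, hessKernelSupport_X0_pow hd, Set.ncard_pair]
    rw [Ne, Finsupp.eq_single_zero_add_single_one_iff]
    simp
  · rintro rfl hd2
    rw [Nat.sub_sub_self (by omega), hessKernelSupport_X0_pow_mul_X1 (by omega),
      Set.ncard_singleton]
  · rintro rfl rfl
    rw [hessKernelSupport_X0_mul_X1, Set.ncard_pair]
    rw [Ne, Finsupp.eq_single_zero_add_single_one_iff]
    simp
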